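/- (Irregular posterior convergence for the shifted exponential family.) For θ ∈ R, let F_θ(x) = (1 − e^{−(x−θ)}) ∨ 0 and let X_1, X_2, ... be an i.i.d. sample from F_{θ_0} for some θ_0 ∈ R. Let π : R → (0,∞) be a continuous Lebesgue probability density, used as prior. Then the associated posterior distribution satisfies sup_A |Π_n(θ ∈ A | X_1,...,X_n) − Exp⁻_{θ̂_n, n}(A)| → 0 in P_{θ_0}-probability, where θ̂_n = X_(1) = min{X_1,...,X_n} is the maximum likelihood estimate of θ_0 and the supremum runs over all Borel sets A ⊂ R. -/

import Mathlib

open MeasureTheory Filter Topology Real Asymptotics ProbabilityTheory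

namespace Paper

variable {𝒳 : Type*} [MeasurableSpace 𝒳]

/-- Joint law of an i.i.d. sample of size `n` from `P`. -/
noncomputable def jointLaw (P : Measure 𝒳) (n : ℕ) : Measure (Fin n → 𝒳) :=
  Measure.pi fun _ => P

/-- `R n → 0` in `P₀`-probability under the i.i.d. joint law: the `o_{P₀}(1)` property. -/
def smallOP (P₀ : Measure 𝒳) (R : (n : ℕ) → (Fin n → 𝒳) → ℝ) : Prop :=
  ∀ ε : ℝ, 0 < ε → Tendsto (fun n => jointLaw P₀ n {x | ε ≤ |R n x|}) atTop (𝓝 0)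

/-- Bounded in `P₀`-probability: the `O_{P₀}(1)` property for a stochastic sequence. -/
def boundedOP (P₀ : Measure 𝒳) {E : Type*} [Norm E]
    (h : (n : ℕ) → (Fin n → 𝒳) → E) : Prop :=
  ∀ ε : ℝ, 0 < ε → ∃ M : ℝ, 0 < M ∧
    ∀ n, jointLaw P₀ n {x | M < ‖h n x‖} ≤ ENNReal.ofReal ε

/-- Weak convergence of the laws of the statistics `T n` under `Q n` to the law `L`. -/
def weakLim {E : Type*} [TopologicalSpace E] [MeasurableSpace E]
    (Q : (n : ℕ) → Measure (Fin n → 𝒳)) (T : (n : ℕ) → (Fin n → 𝒳) → E)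
    (L : Measure E) : Prop :=
  ∀ f : BoundedContinuousFunction E ℝ,
    Tendsto (fun n => ∫ x, f (T n x) ∂(Q n)) atTop (𝓝 (∫ y, f y ∂L))

/-- Density of the shifted (standard) exponential distribution `F_θ`. -/
noncomputable def pexp (θ x : ℝ) : ℝ := if θ ≤ x then Real.exp (-(x - θ)) else 0

/-- The shifted exponential distribution with support boundary `θ`. -/
noncomputable def Pexp (θ : ℝ) : Measure ℝ :=
  (volume : Measure ℝ).withDensity fun x => ENNReal.ofReal (pexp θ x)

/-- The negative exponential location-scale distribution `Exp⁻_{Δ,λ}`, with Lebesgue density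
`x ↦ λ e^{-λ(Δ - x)} 1{x ≤ Δ}`. -/
noncomputable def expNeg (Δ lam : ℝ) : Measure ℝ :=
  (volume : Measure ℝ).withDensity fun x =>
    ENNReal.ofReal (if x ≤ Δ then lam * Real.exp (-lam * (Δ - x)) else 0)

/-- Posterior for the shifted exponential model with prior Lebesgue density `dens`. -/
noncomputable def postExp (dens : ℝ → ℝ) {n : ℕ} (x : Fin n → ℝ) (A : Set ℝ) : ℝ :=
  (∫ θ in A, (∏ i, pexp θ (x i)) * dens θ) / ∫ θ, (∏ i, pexp θ (x i)) * dens θ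

/-!
For `n ≥ 1` the likelihood `θ ↦ ∏ i, pexp θ (x i)` is a constant multiple of the density of
`Exp⁻_{m, n}` with `m = X₍₁₎`, so the posterior is `Exp⁻_{m, n}` reweighted by the prior density
`π` and renormalised. Reweighting a probability measure `ν` by `π` moves the mass of every set by at
most `2 ∫ |π - π m| dν / ∫ π dν`. Since `Exp⁻_{m, n}` lives in a window of width `O(1/n)` to the
left of `m`, `∫ |π - π m| dExp⁻_{m, n} → 0` uniformly for `m` in a compact set, while `∫ π dν`
stays bounded below there. Finally `X₍₁₎ ∈ [θ₀, θ₀ + 1]` outside an event of probability `e⁻ⁿ`.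
-/

open Set

noncomputable def expNegDensity (Δ lam x : ℝ) : ℝ :=
  if x ≤ Δ then lam * Real.exp (-lam * (Δ - x)) else 0

theorem expNeg_eq_withDensity (Δ lam : ℝ) :
    expNeg Δ lam = volume.withDensity fun x => ENNReal.ofReal (expNegDensity Δ lam x) := rfl

theorem expNegDensity_nonneg {Δ lam : ℝ} (hlam : 0 ≤ lam) (x : ℝ) : 0 ≤ expNegDensity Δ lam x := by
  unfold expNegDensity; split_ifs <;> positivity

theorem expNegDensity_le {Δ lam t x : ℝ} (hlam : 0 ≤ lam) (hx : x ≤ t) :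
    expNegDensity Δ lam x ≤ lam * Real.exp (-lam * (Δ - t)) := by
  unfold expNegDensity
  split_ifs
  · exact mul_le_mul_of_nonneg_left (Real.exp_le_exp.2 (by nlinarith)) hlam
  · positivity

theorem expNegDensity_le_self {Δ lam : ℝ} (hlam : 0 ≤ lam) (x : ℝ) :
    expNegDensity Δ lam x ≤ lam := by
  unfold expNegDensity
  split_ifs with hx
  · exact mul_le_of_le_one_right hlam (Real.exp_le_one_iff.2 (by nlinarith))
  · exact hlam

theorem measurable_expNegDensity (Δ lam : ℝ) : Measurable (expNegDensity Δ lam) :=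
  Measurable.ite measurableSet_Iic (by fun_prop) measurable_const

theorem restrict_withDensity_le_smul {α : Type*} [MeasurableSpace α] {μ : Measure α}
    {f : α → ENNReal} {s : Set α} {c : ENNReal} (hs : MeasurableSet s) (hf : ∀ x ∈ s, f x ≤ c) :
    (μ.withDensity f).restrict s ≤ c • μ := by
  rw [restrict_withDensity hs, ← withDensity_const]
  refine (withDensity_mono ((ae_restrict_iff' hs).2 (.of_forall hf))).trans ?_
  rw [withDensity_const, withDensity_const]
  exact smul_le_smul_left _ Measure.restrict_le_self

theorem restrict_Iic_expNeg_le {Δ lam : ℝ} (hlam : 0 ≤ lam) (t : ℝ) :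
    (expNeg Δ lam).restrict (Iic t) ≤ ENNReal.ofReal (lam * Real.exp (-lam * (Δ - t))) • volume :=
  restrict_withDensity_le_smul measurableSet_Iic fun _ hx =>
    ENNReal.ofReal_le_ofReal (expNegDensity_le hlam hx)

theorem expNeg_le_smul_volume {Δ lam : ℝ} (hlam : 0 ≤ lam) :
    expNeg Δ lam ≤ ENNReal.ofReal lam • volume := by
  rw [expNeg_eq_withDensity]
  simpa using restrict_withDensity_le_smul (μ := volume) MeasurableSet.univ
    fun x _ => ENNReal.ofReal_le_ofReal (expNegDensity_le_self (Δ := Δ) hlam x)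

theorem expNeg_Ioi_self (Δ lam : ℝ) : expNeg Δ lam (Ioi Δ) = 0 := by
  rw [expNeg_eq_withDensity, withDensity_apply _ measurableSet_Ioi]
  refine (setLIntegral_congr_fun measurableSet_Ioi fun x hx => ?_).trans lintegral_zero
  simp [expNegDensity, not_le.2 (mem_Ioi.1 hx)]

theorem expNeg_Iic {Δ lam t : ℝ} (hlam : 0 < lam) (ht : t ≤ Δ) :
    expNeg Δ lam (Iic t) = ENNReal.ofReal (Real.exp (-lam * (Δ - t))) := by
  have hdens : ∀ x ∈ Iic t,
      expNegDensity Δ lam x = lam * Real.exp (-lam * Δ) * Real.exp (lam * x) := fun x hx => by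
    rw [expNegDensity, if_pos ((mem_Iic.1 hx).trans ht), mul_assoc, ← Real.exp_add]
    ring_nf
  have hint : IntegrableOn (fun x => lam * Real.exp (-lam * Δ) * Real.exp (lam * x)) (Iic t) :=
    (integrableOn_exp_mul_Iic hlam t).const_mul _
  rw [expNeg_eq_withDensity, withDensity_apply _ measurableSet_Iic,
    setLIntegral_congr_fun measurableSet_Iic fun x hx => by rw [hdens x hx],
    ← ofReal_integral_eq_lintegral_ofReal hint (.of_forall fun x => by positivity),
    integral_const_mul, integral_exp_mul_Iic hlam]
  congr 1
  field_simp
  rw [← Real.exp_add]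
  ring_nf

theorem isProbabilityMeasure_expNeg (Δ : ℝ) {lam : ℝ} (hlam : 0 < lam) :
    IsProbabilityMeasure (expNeg Δ lam) := by
  constructor
  rw [← Iic_union_Ioi (a := Δ), measure_union (Iic_disjoint_Ioi le_rfl) measurableSet_Ioi,
    expNeg_Iic hlam le_rfl, expNeg_Ioi_self]
  simp

theorem setIntegral_expNeg {Δ lam : ℝ} (hlam : 0 ≤ lam) (g : ℝ → ℝ) {s : Set ℝ}
    (hs : MeasurableSet s) :
    ∫ x in s, g x ∂expNeg Δ lam = ∫ x in s, expNegDensity Δ lam x * g x := by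
  rw [expNeg_eq_withDensity, setIntegral_withDensity_eq_setIntegral_toReal_smul₀
    (measurable_expNegDensity Δ lam).ennreal_ofReal.aemeasurable
    (.of_forall fun _ => ENNReal.ofReal_lt_top) g hs]
  simp_rw [ENNReal.toReal_ofReal (expNegDensity_nonneg hlam _), smul_eq_mul]

theorem integrable_expNeg {f : ℝ → ℝ} (hf : Integrable f) (Δ : ℝ) {lam : ℝ} (hlam : 0 ≤ lam) :
    Integrable f (expNeg Δ lam) :=
  (hf.smul_measure ENNReal.ofReal_ne_top).mono_measure (expNeg_le_smul_volume hlam)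

/-- Away from `Δ` the density of `expNeg Δ lam` is at most `lam * exp (-lam * δ)`, so an integrable
`f` contributes little; near `Δ` only the oscillation `η` of `f` matters. -/
theorem integral_abs_sub_expNeg_le {f : ℝ → ℝ} (hf : Integrable f) {Δ lam δ η : ℝ}
    (hlam : 0 < lam) (hδ : 0 < δ) (hloc : ∀ θ ∈ Ioc (Δ - δ) Δ, |f θ - f Δ| ≤ η) :
    ∫ θ, |f θ - f Δ| ∂expNeg Δ lam ≤ η + (lam * (∫ θ, |f θ|) + |f Δ|) * Real.exp (-lam * δ) := by
  set ν := expNeg Δ lam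
  have := isProbabilityMeasure_expNeg Δ hlam
  have hη : 0 ≤ η := (abs_nonneg _).trans (hloc Δ ⟨by linarith, le_rfl⟩)
  have hfν : Integrable f ν := integrable_expNeg hf Δ hlam.le
  have hgν : Integrable (fun θ => |f θ - f Δ|) ν := (hfν.sub (integrable_const _)).abs
  have hnear : ∫ θ in Ioi (Δ - δ), |f θ - f Δ| ∂ν ≤ η := by
    have hle : ∀ᵐ θ ∂ν, θ ∉ Ioi Δ := measure_eq_zero_iff_ae_notMem.1 (expNeg_Ioi_self Δ lam)
    have hae : ∀ᵐ θ ∂ν.restrict (Ioi (Δ - δ)), ‖|f θ - f Δ|‖ ≤ η := by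
      filter_upwards [ae_restrict_mem measurableSet_Ioi, ae_restrict_of_ae hle] with θ h1 h2
      simpa using hloc θ ⟨h1, not_lt.1 h2⟩
    calc _ ≤ η * ν.real (Ioi (Δ - δ)) :=
          (le_abs_self _).trans (norm_setIntegral_le_of_norm_le_const_ae (measure_lt_top _ _) hae)
      _ ≤ η := mul_le_of_le_one_right hη measureReal_le_one
  have hfar : ∫ θ in Iic (Δ - δ), |f θ - f Δ| ∂ν
      ≤ (lam * (∫ θ, |f θ|) + |f Δ|) * Real.exp (-lam * δ) := by
    have hmass : ν.real (Iic (Δ - δ)) = Real.exp (-lam * δ) := by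
      rw [measureReal_def, expNeg_Iic hlam (by linarith), ENNReal.toReal_ofReal (by positivity)]
      ring_nf
    have htail : ∫ θ in Iic (Δ - δ), |f θ| ∂ν ≤ lam * Real.exp (-lam * δ) * ∫ θ, |f θ| := by
      have := integral_mono_measure (restrict_Iic_expNeg_le (Δ := Δ) hlam.le (Δ - δ))
        (.of_forall fun θ => abs_nonneg (f θ)) (hf.abs.smul_measure ENNReal.ofReal_ne_top)
      rwa [integral_smul_measure, ENNReal.toReal_ofReal (by positivity), sub_sub_cancel,
        smul_eq_mul] at this
    calc ∫ θ in Iic (Δ - δ), |f θ - f Δ| ∂ν ≤ ∫ θ in Iic (Δ - δ), (|f θ| + |f Δ|) ∂ν :=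
          setIntegral_mono hgν.integrableOn (hfν.abs.add (integrable_const _)).integrableOn
            fun θ => abs_sub _ _
      _ = ∫ θ in Iic (Δ - δ), |f θ| ∂ν + ν.real (Iic (Δ - δ)) * |f Δ| := by
          rw [integral_add hfν.abs.integrableOn (integrable_const _), setIntegral_const,
            smul_eq_mul]
      _ ≤ lam * Real.exp (-lam * δ) * (∫ θ, |f θ|) + Real.exp (-lam * δ) * |f Δ| := by
          rw [hmass]; linarith
      _ = _ := by ring
  rw [← integral_add_compl measurableSet_Iic hgν, compl_Iic]
  linarith

theorem tendstoUniformlyOn_integral_abs_sub_expNeg {f : ℝ → ℝ} (hf : Integrable f)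
    (hfc : Continuous f) {K : Set ℝ} (hK : IsCompact K) :
    TendstoUniformlyOn (fun (n : ℕ) m => ∫ θ, |f θ - f m| ∂expNeg m n) 0 atTop K := by
  rw [Metric.tendstoUniformlyOn_iff]
  intro η hη
  obtain ⟨δ, hδ, hδf⟩ := Metric.mem_uniformity_dist.1 <|
    hK.uniformContinuousAt_of_continuousAt f (fun _ _ => hfc.continuousAt)
      (Metric.dist_mem_uniformity (half_pos hη))
  obtain ⟨M, hM⟩ := hK.exists_bound_of_continuousOn hfc.continuousOn
  set I := ∫ θ, |f θ|
  set r := Real.exp (-(δ / 2))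
  have hr0 : 0 ≤ r := Real.exp_nonneg _
  have hr : r < 1 := Real.exp_lt_one_iff.2 (by linarith)
  have htail : Tendsto (fun n : ℕ => (n * I + M) * r ^ n) atTop (𝓝 0) := by
    have := ((tendsto_self_mul_const_pow_of_lt_one hr0 hr).mul_const I).add
      ((tendsto_pow_atTop_nhds_zero_of_lt_one hr0 hr).const_mul M)
    simpa [add_mul, mul_right_comm] using this
  filter_upwards [htail.eventually (gt_mem_nhds (half_pos hη)), eventually_gt_atTop 0]
    with n hn hn0 m hm
  have hloc : ∀ θ ∈ Ioc (m - δ / 2) m, |f θ - f m| ≤ η / 2 := fun θ hθ => by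
    have hdist : dist m θ < δ := by
      rw [Real.dist_eq, abs_lt]; constructor <;> linarith [hθ.1, hθ.2]
    have := hδf hdist hm
    rw [mem_ofPred_eq, Real.dist_eq, abs_sub_comm] at this
    exact this.le
  have hE := integral_abs_sub_expNeg_le hf (Nat.cast_pos.2 hn0) (half_pos hδ) hloc
  have hrn : Real.exp (-(n : ℝ) * (δ / 2)) = r ^ n := by
    rw [← Real.exp_nat_mul]; ring_nf
  have hfm : |f m| ≤ M := hM m hm
  rw [Pi.zero_apply, dist_zero_left, Real.norm_eq_abs,
    abs_of_nonneg (integral_nonneg fun θ => abs_nonneg _)]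
  calc _ ≤ η / 2 + ((n : ℝ) * I + |f m|) * r ^ n := by rwa [hrn] at hE
    _ ≤ η / 2 + ((n : ℝ) * I + M) * r ^ n := by gcongr
    _ < η := by linarith

section ProbabilityMeasure

variable {α : Type*} [MeasurableSpace α] {ν : Measure α} [IsProbabilityMeasure ν] {f : α → ℝ}

theorem abs_sub_integral_le (hf : Integrable f ν) (a : ℝ) :
    |a - ∫ x, f x ∂ν| ≤ ∫ x, |f x - a| ∂ν := by
  have : a - ∫ x, f x ∂ν = ∫ x, (a - f x) ∂ν := by
    rw [integral_sub (integrable_const a) hf]; simp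
  rw [this]
  exact abs_integral_le_integral_abs.trans_eq
    (integral_congr_ae (.of_forall fun x => abs_sub_comm _ _))

theorem abs_setIntegral_div_integral_sub_measureReal_le (hf : Integrable f ν)
    (hc : 0 < ∫ x, f x ∂ν) (a : ℝ) (s : Set α) :
    |(∫ x in s, f x ∂ν) / (∫ x, f x ∂ν) - ν.real s| ≤ 2 * (∫ x, |f x - a| ∂ν) / ∫ x, f x ∂ν := by
  set c := ∫ x, f x ∂ν
  have hsplit : (∫ x in s, f x ∂ν) / c - ν.real s = (∫ x in s, (f x - c) ∂ν) / c := by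
    rw [integral_sub hf.integrableOn (integrable_const c), setIntegral_const, smul_eq_mul]
    field_simp
  have hg : Integrable (fun x => |f x - c|) ν := (hf.sub (integrable_const c)).abs
  have hga : Integrable (fun x => |f x - a|) ν := (hf.sub (integrable_const a)).abs
  rw [hsplit, abs_div, abs_of_pos hc]
  gcongr
  calc |∫ x in s, (f x - c) ∂ν| ≤ ∫ x in s, |f x - c| ∂ν := abs_integral_le_integral_abs
    _ ≤ ∫ x, |f x - c| ∂ν := setIntegral_le_integral hg (.of_forall fun _ => abs_nonneg _)
    _ ≤ ∫ x, (|f x - a| + |a - c|) ∂ν :=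
        integral_mono hg (hga.add (integrable_const _)) fun x => abs_sub_le _ _ _
    _ = (∫ x, |f x - a| ∂ν) + |a - c| := by rw [integral_add hga (integrable_const _)]; simp
    _ ≤ 2 * ∫ x, |f x - a| ∂ν := by linarith [abs_sub_integral_le hf a]

end ProbabilityMeasure

theorem prod_pexp_eq {n : ℕ} [NeZero n] (x : Fin n → ℝ) (θ : ℝ) :
    ∏ i, pexp θ (x i)
      = Real.exp (n * (⨅ i, x i) - ∑ i, x i) / n * expNegDensity (⨅ i, x i) n θ := by
  by_cases h : θ ≤ ⨅ i, x i
  · have hx : ∀ i, θ ≤ x i := fun i => h.trans (ciInf_le (finite_range x).bddBelow i)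
    simp_rw [pexp, if_pos (hx _)]
    rw [← Real.exp_sum, expNegDensity, if_pos h]
    have hn : (n : ℝ) ≠ 0 := Nat.cast_ne_zero.2 (NeZero.ne n)
    field_simp
    rw [← Real.exp_add]
    congr 1
    simp only [neg_sub, Finset.sum_sub_distrib, Finset.sum_const, Finset.card_univ,
      Fintype.card_fin, nsmul_eq_mul]
    ring
  · obtain ⟨i, hi⟩ := exists_lt_of_ciInf_lt (not_le.1 h)
    rw [Finset.prod_eq_zero (Finset.mem_univ i) (if_neg (not_le.2 hi)), expNegDensity, if_neg h,
      mul_zero]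

theorem postExp_eq {n : ℕ} [NeZero n] (dens : ℝ → ℝ) (x : Fin n → ℝ) {A : Set ℝ}
    (hA : MeasurableSet A) :
    postExp dens x A
      = (∫ θ in A, dens θ ∂expNeg (⨅ i, x i) n) / ∫ θ, dens θ ∂expNeg (⨅ i, x i) n := by
  have hn : (0 : ℝ) ≤ n := n.cast_nonneg
  rw [← setIntegral_univ (μ := expNeg _ _), setIntegral_expNeg hn _ hA,
    setIntegral_expNeg hn _ MeasurableSet.univ, setIntegral_univ, postExp]
  simp_rw [prod_pexp_eq x, mul_assoc]
  rw [integral_const_mul, integral_const_mul, mul_div_mul_left _ _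
    (div_ne_zero (Real.exp_pos _).ne' (Nat.cast_ne_zero.2 (NeZero.ne n)))]

theorem _root_.IsCompact.exists_pos_forall_le {α : Type*} [TopologicalSpace α] {K : Set α}
    (hK : IsCompact K) {f : α → ℝ}
    (hf : ContinuousOn f K) (hpos : ∀ x ∈ K, 0 < f x) : ∃ a > 0, ∀ x ∈ K, a ≤ f x := by
  rcases K.eq_empty_or_nonempty with rfl | hne
  · exact ⟨1, one_pos, by simp⟩
  · obtain ⟨x₀, hx₀, hmin⟩ := hK.exists_isMinOn hne hf
    exact ⟨f x₀, hpos x₀ hx₀, fun x hx => hmin hx⟩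

theorem eventually_forall_abs_iSup_postExp_sub_expNeg_lt {dens : ℝ → ℝ} (hcont : Continuous dens)
    (hpos : ∀ θ, 0 < dens θ) (hint : Integrable dens) {K : Set ℝ} (hK : IsCompact K) {ε : ℝ}
    (hε : 0 < ε) :
    ∀ᶠ n : ℕ in atTop, ∀ x : Fin n → ℝ, (⨅ i, x i) ∈ K →
      |(⨆ A : Set ℝ, ⨆ _ : MeasurableSet A,
        |postExp dens x A - (expNeg (⨅ i, x i) n A).toReal|)| < ε := by
  obtain ⟨a, ha, haK⟩ := hK.exists_pos_forall_le hcont.continuousOn fun θ _ => hpos θ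
  set η := min (a / 2) (ε * a / 8)
  have hη : 0 < η := lt_min (by linarith) (by positivity)
  filter_upwards [Metric.tendstoUniformlyOn_iff.1
    (tendstoUniformlyOn_integral_abs_sub_expNeg hint hcont hK) η hη, eventually_gt_atTop 0]
    with n hE hn x hx
  have : NeZero n := ⟨hn.ne'⟩
  set m := ⨅ i, x i
  set ν := expNeg m n
  have := isProbabilityMeasure_expNeg m (Nat.cast_pos.2 hn)
  have hdν : Integrable dens ν := integrable_expNeg hint m n.cast_nonneg
  set E := ∫ θ, |dens θ - dens m| ∂ν
  set c := ∫ θ, dens θ ∂ν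
  have hE0 : 0 ≤ E := integral_nonneg fun _ => abs_nonneg _
  have hEη : E < η := by
    have h := hE m hx
    rw [Pi.zero_apply, dist_zero_left, Real.norm_eq_abs] at h
    exact (le_abs_self E).trans_lt h
  have hc : a / 2 ≤ c := by
    linarith [(abs_le.1 (abs_sub_integral_le hdν (dens m))).2, haK m hx,
      min_le_left (a / 2) (ε * a / 8)]
  have hbound : 2 * E / c < ε := by
    rw [div_lt_iff₀ (by linarith)]
    nlinarith [min_le_right (a / 2) (ε * a / 8), mul_le_mul_of_nonneg_left hc hε.le]
  have hA : ∀ A, MeasurableSet A → |postExp dens x A - (ν A).toReal| ≤ 2 * E / c := fun A hA => by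
    rw [postExp_eq dens x hA]
    exact abs_setIntegral_div_integral_sub_measureReal_le hdν (by linarith) (dens m) A
  have hb : 0 ≤ 2 * E / c := div_nonneg (by linarith) (by linarith)
  rw [abs_of_nonneg (Real.iSup_nonneg fun _ => Real.iSup_nonneg fun _ => abs_nonneg _)]
  exact (Real.iSup_le (fun A => Real.iSup_le (hA A) hb) hb).trans_lt hbound

theorem jointLaw_iInf_notMem_Icc_le {P : Measure ℝ} [SigmaFinite P] {a b : ℝ} (ha : P (Iio a) = 0)
    (n : ℕ) [NeZero n] : jointLaw P n {x | ⨅ i, x i ∉ Icc a b} ≤ P (Ioi b) ^ n := by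
  have hsub : {x : Fin n → ℝ | ⨅ i, x i ∉ Icc a b}
      ⊆ (⋃ i, Function.eval i ⁻¹' Iio a) ∪ univ.pi fun _ => Ioi b := by
    intro x hx
    rw [mem_ofPred_eq, mem_Icc, not_and_or, not_le, not_le] at hx
    rcases hx with h | h
    · obtain ⟨i, hi⟩ := exists_lt_of_ciInf_lt h
      exact Or.inl (mem_iUnion.2 ⟨i, hi⟩)
    · exact Or.inr fun i _ => h.trans_le (ciInf_le (finite_range x).bddBelow i)
  calc _ ≤ jointLaw P n ((⋃ i, Function.eval i ⁻¹' Iio a) ∪ univ.pi fun _ => Ioi b) :=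
        measure_mono hsub
    _ ≤ jointLaw P n (⋃ i, Function.eval i ⁻¹' Iio a) + jointLaw P n (univ.pi fun _ => Ioi b) :=
        measure_union_le _ _
    _ = P (Ioi b) ^ n := by
        rw [jointLaw, measure_iUnion_null fun i => Measure.pi_eval_preimage_null _ ha,
          Measure.pi_pi]
        simp

instance (θ : ℝ) : SigmaFinite (Pexp θ) := SigmaFinite.withDensity_ofReal _

theorem Pexp_Iio_self (θ : ℝ) : Pexp θ (Iio θ) = 0 := by
  rw [Pexp, withDensity_apply _ measurableSet_Iio]
  refine (setLIntegral_congr_fun measurableSet_Iio fun x hx => ?_).trans lintegral_zero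
  simp [pexp, not_le.2 (mem_Iio.1 hx)]

theorem Pexp_Ioi {θ t : ℝ} (h : θ ≤ t) : Pexp θ (Ioi t) = ENNReal.ofReal (Real.exp (θ - t)) := by
  have hdens : ∀ x ∈ Ioi t, pexp θ x = Real.exp θ * Real.exp (-x) := fun x hx => by
    rw [pexp, if_pos (h.trans (mem_Ioi.1 hx).le), ← Real.exp_add]
    ring_nf
  rw [Pexp, withDensity_apply _ measurableSet_Ioi,
    setLIntegral_congr_fun measurableSet_Ioi fun x hx => by rw [hdens x hx],
    ← ofReal_integral_eq_lintegral_ofReal ((integrableOn_exp_neg_Ioi t).const_mul _)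
      (.of_forall fun x => by positivity),
    integral_const_mul, integral_exp_neg_Ioi, ← Real.exp_add, sub_eq_add_neg]

/-- irregular posterior convergence for the shifted exponential family:
the posterior converges in total variation to `Exp⁻_{X₍₁₎, n}`, in `P_{θ₀}`-probability. -/
theorem irregular_posterior_convergence_exponential
    (θ₀ : ℝ) (dens : ℝ → ℝ) (hcont : Continuous dens) (hpos : ∀ θ, 0 < dens θ)
    (hprobdens : ∫ θ, dens θ = 1) :
    smallOP (Pexp θ₀) (fun n x =>
      ⨆ A : Set ℝ, ⨆ _ : MeasurableSet A,
        |postExp dens x A - (expNeg (⨅ i, x i) n A).toReal|) := by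
  intro ε hε
  have hint : Integrable dens := .of_integral_ne_zero (by rw [hprobdens]; exact one_ne_zero)
  have hr : ENNReal.ofReal (Real.exp (-1)) < 1 := by
    rw [ENNReal.ofReal_lt_one]; exact Real.exp_lt_one_iff.2 (by norm_num)
  refine tendsto_of_tendsto_of_tendsto_of_le_of_le' tendsto_const_nhds
    (ENNReal.tendsto_pow_atTop_nhds_zero_of_lt_one hr) (.of_forall fun _ => bot_le) ?_
  filter_upwards [eventually_forall_abs_iSup_postExp_sub_expNeg_lt hcont hpos hint
    isCompact_Icc hε, eventually_gt_atTop 0] with n hgood hn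
  have : NeZero n := ⟨hn.ne'⟩
  calc jointLaw (Pexp θ₀) n _ ≤ jointLaw (Pexp θ₀) n {x | ⨅ i, x i ∉ Icc θ₀ (θ₀ + 1)} :=
        measure_mono fun x hx hK => (hgood x hK).not_ge hx
    _ ≤ Pexp θ₀ (Ioi (θ₀ + 1)) ^ n := jointLaw_iInf_notMem_Icc_le (Pexp_Iio_self θ₀) n
    _ = ENNReal.ofReal (Real.exp (-1)) ^ n := by rw [Pexp_Ioi (by linarith)]; ring_nf

end Paper
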